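/- For every complex number z, the determinant det( Complex.cosh(z·b) • (1 : E_ℂ →ₗ[ℂ] E_ℂ) − (Complex.sinh(z·b)/b) • A_ℂ ) vanishes if and only if either (a) there exist a real eigenvalue λ of A with |λ| > b and an integer k such that z = (Real.artanh (b/λ) + k·π·I)/b, or (b) there exist a real eigenvalue λ of A with |λ| < b and an integer k such that z = (Real.artanh (λ/b) + (k + 1/2)·π·I)/b. -/

import Mathlib

/-!
Diagonalising `A` in an orthonormal eigenbasis, the determinant becomes
`∏ λ (cosh (z b) - (λ / b) sinh (z b))` over the eigenvalues `λ` of `A`. A factor vanishes iff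
`exp (2 z b) = (λ + b) / (λ - b)`; this real number is positive for `|λ| > b`, negative for
`|λ| < b`, and no solution exists for `|λ| = b`. Taking complex logarithms gives the two families,
since `artanh (b / λ)` and `artanh (λ / b)` are half the logarithms of `±(λ + b) / (λ - b)`.
-/

open scoped TensorProduct

noncomputable def Real.artanhOfLog (x : ℝ) : ℝ := (1 / 2) * Real.log ((1 + x) / (1 - x))

open Real

theorem Real.artanhOfLog_div {x y : ℝ} (hy : y ≠ 0) :
    artanhOfLog (x / y) = log ((y + x) / (y - x)) / 2 := by
  rw [artanhOfLog, one_add_div hy, one_sub_div hy, div_div_div_cancel_right₀ hy]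
  ring

section Diagonal

open Matrix LinearMap

variable {R M ι : Type*} [CommRing R] [AddCommGroup M] [Module R M] [Fintype ι] [DecidableEq ι]

theorem LinearMap.det_smul_one_sub_smul_of_toMatrix_eq_diagonal {f : M →ₗ[R] M}
    (b : Module.Basis ι R M) {μ : ι → R} (hf : toMatrix b b f = diagonal μ) (c s : R) :
    LinearMap.det (c • 1 - s • f) = ∏ i, (c - s * μ i) := by
  rw [← det_toMatrix b, _root_.map_sub, _root_.map_smul, _root_.map_smul, toMatrix_one, hf,
    smul_one_eq_diagonal, ← diagonal_smul, diagonal_sub, det_diagonal]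
  rfl

theorem LinearMap.toMatrix_baseChange_eq_diagonal (L : Type*) [CommRing L] [Algebra R L]
    {f : M →ₗ[R] M} (b : Module.Basis ι R M) {μ : ι → R} (hf : toMatrix b b f = diagonal μ) :
    toMatrix (Algebra.TensorProduct.basis L b) (Algebra.TensorProduct.basis L b) (f.baseChange L) =
      diagonal (algebraMap R L ∘ μ) := by
  rw [toMatrix_baseChange, hf, diagonal_map (map_zero _)]
  rfl

end Diagonal

section Symmetric

variable {𝕜 E : Type*} [RCLike 𝕜] [NormedAddCommGroup E] [InnerProductSpace 𝕜 E]
  [FiniteDimensional 𝕜 E] {T : E →ₗ[𝕜] E} {n : ℕ} (L : Type*) [CommRing L] [Algebra 𝕜 L]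

theorem LinearMap.IsSymmetric.det_smul_one_sub_smul_baseChange (hT : T.IsSymmetric)
    (hn : Module.finrank 𝕜 E = n) (c s : L) :
    LinearMap.det (c • (1 : L ⊗[𝕜] E →ₗ[L] L ⊗[𝕜] E) - s • T.baseChange L) =
      ∏ i, (c - s * algebraMap 𝕜 L (hT.eigenvalues hn i)) :=
  LinearMap.det_smul_one_sub_smul_of_toMatrix_eq_diagonal _
    (toMatrix_baseChange_eq_diagonal L _ (hT.toMatrix_eigenvectorBasis hn)) c s

end Symmetric

theorem LinearMap.IsSymmetric.det_smul_one_sub_smul_baseChange_eq_zero_iff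
    {E L : Type*} [NormedAddCommGroup E] [InnerProductSpace ℝ E] [FiniteDimensional ℝ E]
    [CommRing L] [IsDomain L] [Algebra ℝ L] {T : E →ₗ[ℝ] E} (hT : T.IsSymmetric) (c s : L) :
    LinearMap.det (c • (1 : L ⊗[ℝ] E →ₗ[L] L ⊗[ℝ] E) - s • T.baseChange L) = 0 ↔
      ∃ l : ℝ, Module.End.HasEigenvalue T l ∧ c - s * algebraMap ℝ L l = 0 := by
  rw [hT.det_smul_one_sub_smul_baseChange L rfl, Finset.prod_eq_zero_iff]
  constructor
  · rintro ⟨i, -, hi⟩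
    exact ⟨_, hT.hasEigenvalue_eigenvalues rfl i, hi⟩
  · rintro ⟨l, hl, hl0⟩
    obtain ⟨i, rfl⟩ := hT.exists_eigenvalues_eq rfl hl
    exact ⟨i, Finset.mem_univ i, hl0⟩

namespace Complex

theorem cosh_sub_div_mul_sinh_eq_zero_iff_exp_two_mul {l b : ℂ} (hb : b ≠ 0) (w : ℂ) :
    cosh w - l / b * sinh w = 0 ↔ exp (2 * w) * (l - b) = l + b := by
  have hmul : (cosh w - l / b * sinh w) * (2 * b * exp w) = l + b - exp (2 * w) * (l - b) := by
    rw [cosh, sinh, show 2 * w = w + w by ring, exp_add, exp_neg]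
    field_simp
    ring
  have h2bexp : 2 * b * exp w ≠ 0 := by simp [hb, exp_ne_zero]
  rw [← mul_left_inj' h2bexp, hmul, zero_mul, sub_eq_zero, eq_comm]

theorem exp_eq_ofReal_iff_of_pos {c : ℝ} (hc : 0 < c) {w : ℂ} :
    exp w = c ↔ ∃ k : ℤ, w = Real.log c + k * (2 * π * I) := by
  rw [← Real.exp_log hc, ofReal_exp, exp_eq_exp_iff_exists_int, Real.log_exp]

theorem exp_eq_ofReal_iff_of_neg {c : ℝ} (hc : c < 0) {w : ℂ} :
    exp w = c ↔ ∃ k : ℤ, w = Real.log (-c) + π * I + k * (2 * π * I) := by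
  rw [show (c : ℂ) = exp (Real.log (-c) + π * I) by
    rw [exp_add, exp_pi_mul_I, ← ofReal_exp, Real.exp_log (neg_pos.2 hc)]; push_cast; ring,
    exp_eq_exp_iff_exists_int]

variable {l b : ℝ} (w : ℂ)

theorem cosh_sub_div_mul_sinh_eq_zero_iff_of_lt_abs (hb : 0 < b) (hl : b < |l|) :
    cosh w - l / b * sinh w = 0 ↔ ∃ k : ℤ, w = Real.artanhOfLog (b / l) + k * π * I := by
  have hl0 : l ≠ 0 := by
    rintro rfl
    rw [abs_zero] at hl
    exact hl.not_gt hb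
  have hlb : (l : ℂ) - b ≠ 0 := by
    rw [sub_ne_zero, Ne, ofReal_inj]
    rintro rfl
    exact (abs_of_pos hb).not_gt hl
  have hq : 0 < (l + b) / (l - b) := by
    rcases lt_abs.mp hl with h | h
    · exact div_pos (by linarith) (by linarith)
    · exact div_pos_of_neg_of_neg (by linarith) (by linarith)
  rw [cosh_sub_div_mul_sinh_eq_zero_iff_exp_two_mul (ofReal_ne_zero.2 hb.ne'), ← eq_div_iff hlb,
    show ((l : ℂ) + b) / (l - b) = ((l + b) / (l - b) : ℝ) by push_cast; rfl,
    exp_eq_ofReal_iff_of_pos hq, Real.artanhOfLog_div hl0]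
  refine exists_congr fun k => ?_
  push_cast
  constructor <;> intro h
  · linear_combination h / 2
  · linear_combination 2 * h

theorem cosh_sub_div_mul_sinh_eq_zero_iff_of_abs_lt (hl : |l| < b) :
    cosh w - l / b * sinh w = 0 ↔
      ∃ k : ℤ, w = Real.artanhOfLog (l / b) + (k + 1 / 2) * π * I := by
  obtain ⟨hl₁, hl₂⟩ := abs_lt.mp hl
  have hb : b ≠ 0 := by linarith
  have hlb : (l : ℂ) - b ≠ 0 := by
    rw [sub_ne_zero, Ne, ofReal_inj]
    exact hl₂.ne
  have hq : (l + b) / (l - b) < 0 := div_neg_of_pos_of_neg (by linarith) (by linarith)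
  have hnegq : -((l + b) / (l - b)) = (b + l) / (b - l) := by
    rw [← div_neg, neg_sub, add_comm]
  rw [cosh_sub_div_mul_sinh_eq_zero_iff_exp_two_mul (ofReal_ne_zero.2 hb), ← eq_div_iff hlb,
    show ((l : ℂ) + b) / (l - b) = ((l + b) / (l - b) : ℝ) by push_cast; rfl,
    exp_eq_ofReal_iff_of_neg hq, hnegq, Real.artanhOfLog_div hb]
  refine exists_congr fun k => ?_
  push_cast
  constructor <;> intro h
  · linear_combination h / 2
  · linear_combination 2 * h

theorem cosh_sub_div_mul_sinh_ne_zero_of_abs_eq (hb : 0 < b) (hl : |l| = b) :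
    cosh w - l / b * sinh w ≠ 0 := by
  have hb0 : (b : ℂ) ≠ 0 := ofReal_ne_zero.2 hb.ne'
  rw [Ne, cosh_sub_div_mul_sinh_eq_zero_iff_exp_two_mul hb0]
  intro h
  rcases (abs_eq hb.le).mp hl with rfl | rfl
  · exact hb0 (by linear_combination -h / 2)
  · have : exp (2 * w) * b = 0 := by push_cast at h; linear_combination -h / 2
    exact mul_ne_zero (exp_ne_zero _) hb0 this

theorem cosh_sub_div_mul_sinh_eq_zero_iff (hb : 0 < b) :
    cosh w - l / b * sinh w = 0 ↔
      (b < |l| ∧ ∃ k : ℤ, w = Real.artanhOfLog (b / l) + k * π * I) ∨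
      (|l| < b ∧ ∃ k : ℤ, w = Real.artanhOfLog (l / b) + (k + 1 / 2) * π * I) := by
  rcases lt_trichotomy |l| b with h | h | h
  · simp only [cosh_sub_div_mul_sinh_eq_zero_iff_of_abs_lt w h, h, h.not_gt, true_and, false_and,
      false_or]
  · simp only [cosh_sub_div_mul_sinh_ne_zero_of_abs_eq w hb h, h, lt_irrefl, false_and, or_false]
  · simp only [cosh_sub_div_mul_sinh_eq_zero_iff_of_lt_abs w hb h, h, h.not_gt, true_and,
      false_and, or_false]

end Complex

/-- Let `E` be a finite-dimensional real inner product space, `A` a self-adjoint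
endomorphism of `E`, `b > 0`, `E_ℂ := ℂ ⊗[ℝ] E` the complexification of `E` and
`A_ℂ := LinearMap.baseChange ℂ A` the complexified endomorphism.  For every complex number `z`,
the determinant `det(cosh(z·b) • id − (sinh(z·b)/b) • A_ℂ)` vanishes if and only if either
(a) there exist a real eigenvalue `λ` of `A` with `|λ| > b` and an integer `k` with
`z = (artanh (b/λ) + k·π·I)/b`, or (b) there exist a real eigenvalue `λ` of `A` with `|λ| < b`
and an integer `k` with `z = (artanh (λ/b) + (k + 1/2)·π·I)/b`. -/
theorem det_complexified_cosh_smul_sub_sinh_smul_eq_zero_iff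
    {E : Type*} [NormedAddCommGroup E] [InnerProductSpace ℝ E] [FiniteDimensional ℝ E]
    (A : E →ₗ[ℝ] E) (hA : A.IsSymmetric) (b : ℝ) (hb : 0 < b) (z : ℂ) :
    LinearMap.det (Complex.cosh (z * (b : ℂ)) • (1 : ℂ ⊗[ℝ] E →ₗ[ℂ] ℂ ⊗[ℝ] E)
        - (Complex.sinh (z * (b : ℂ)) / (b : ℂ)) • LinearMap.baseChange ℂ A) = 0 ↔
      (∃ l : ℝ, Module.End.HasEigenvalue A l ∧ b < |l| ∧
        ∃ k : ℤ, z = ((Real.artanhOfLog (b / l) : ℂ) + (k : ℂ) * (Real.pi : ℂ) * Complex.I) / (b : ℂ)) ∨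
      (∃ l : ℝ, Module.End.HasEigenvalue A l ∧ |l| < b ∧
        ∃ k : ℤ, z = ((Real.artanhOfLog (l / b) : ℂ)
          + ((k : ℂ) + 1 / 2) * (Real.pi : ℂ) * Complex.I) / (b : ℂ)) := by
  have hb0 : (b : ℂ) ≠ 0 := Complex.ofReal_ne_zero.2 hb.ne'
  have hfactor (l : ℝ) : Complex.cosh (z * b) - Complex.sinh (z * b) / b * algebraMap ℝ ℂ l = 0 ↔
      (b < |l| ∧ ∃ k : ℤ, z = (Real.artanhOfLog (b / l) + k * π * Complex.I) / b) ∨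
      (|l| < b ∧ ∃ k : ℤ, z = (Real.artanhOfLog (l / b) + (k + 1 / 2) * π * Complex.I) / b) := by
    rw [Complex.coe_algebraMap, div_mul_comm, Complex.cosh_sub_div_mul_sinh_eq_zero_iff _ hb]
    simp only [eq_div_iff hb0]
  rw [hA.det_smul_one_sub_smul_baseChange_eq_zero_iff]
  simp only [hfactor, and_or_left, exists_or]
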